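/- arXiv:1806.00561 — 5 statements merged into one kernel-verified Lean document; each statement's English description precedes it below -/
import Mathlib

section
/- Let X be a Hilbert space and A, B closed linear subspaces of X, with at least one of A, B finite-dimensional. If (b_n) is a sequence in B such that dist(b_n, A) → 0 as n → ∞, then dist(b_n, A ∩ B) → 0 as n → ∞. -/
open Filter Metric Pointwise

lemma aux_sub_image_coe {X : Type*} [NormedAddCommGroup X] (S : AddSubgroup X) {p : X}
    (hp : p ∈ S) : (fun y => y - p) '' (S : Set X) = (S : Set X) := by
  ext y
  constructor
  · rintro ⟨z, hz, rfl⟩; exact S.sub_mem hz hp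
  · intro hy; exact ⟨y + p, S.add_mem hy hp, add_sub_cancel_right y p⟩

lemma aux_infDist_sub_right {X : Type*} [NormedAddCommGroup X] (S : AddSubgroup X) {p : X}
    (hp : p ∈ S) (x : X) : infDist (x - p) (S : Set X) = infDist x (S : Set X) := by
  conv_lhs => rw [← aux_sub_image_coe S hp]
  exact infDist_image (Isometry.of_dist_eq fun a b => by simp [dist_eq_norm])

lemma aux_smul_coe {X : Type*} [NormedAddCommGroup X] [NormedSpace ℂ X] {c : ℂ} (hc : c ≠ 0)
    (S : Submodule ℂ X) : c • (S : Set X) = (S : Set X) := by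
  ext y
  rw [Set.mem_smul_set_iff_inv_smul_mem₀ hc]
  constructor
  · intro h
    have := S.smul_mem c h
    rwa [smul_inv_smul₀ hc] at this
  · intro h; exact S.smul_mem _ h

lemma aux_infDist_smul {X : Type*} [NormedAddCommGroup X] [NormedSpace ℂ X] {c : ℂ} (hc : c ≠ 0)
    (S : Submodule ℂ X) (x : X) : infDist (c • x) (S : Set X) = ‖c‖ * infDist x (S : Set X) := by
  conv_lhs => rw [← aux_smul_coe hc S]
  exact infDist_smul₀ hc _ _

/-- Concluding contradiction: a sequence in `B` at distance exactly 1 from `A ⊓ B`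
with a subsequence converging to a point of `A`. -/
lemma aux_final {X : Type*} [NormedAddCommGroup X] [NormedSpace ℂ X]
    (A B : Submodule ℂ X) (hB : IsClosed (B : Set X))
    (z : ℕ → X) (hzB : ∀ n, z n ∈ B)
    (hz1 : ∀ n, infDist (z n) ((A ⊓ B : Submodule ℂ X) : Set X) = 1)
    (l : X) (hlA : l ∈ A) (φ : ℕ → ℕ)
    (hl : Tendsto (fun n => z (φ n)) atTop (nhds l)) : False := by
  have hlB : l ∈ B := hB.mem_of_tendsto hl (Eventually.of_forall fun n => hzB _)
  have h0 : Tendsto (fun n => infDist (z (φ n)) ((A ⊓ B : Submodule ℂ X) : Set X)) atTop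
      (nhds (infDist l ((A ⊓ B : Submodule ℂ X) : Set X))) :=
    ((continuous_infDist_pt _).tendsto l).comp hl
  rw [infDist_zero_of_mem (by exact Submodule.mem_inf.2 ⟨hlA, hlB⟩)] at h0
  simp only [hz1] at h0
  exact one_ne_zero (tendsto_nhds_unique tendsto_const_nhds h0)

/-- Key uniform bound: there is `c > 0` with `dist(x, A ⊓ B) ≤ c * dist(x, A)` for `x ∈ B`. -/
lemma aux_key {X : Type*} [NormedAddCommGroup X] [NormedSpace ℂ X]
    (A B : Submodule ℂ X) (hA : IsClosed (A : Set X)) (hB : IsClosed (B : Set X))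
    (hfin : FiniteDimensional ℂ A ∨ FiniteDimensional ℂ B) :
    ∃ c : ℝ, 0 < c ∧ ∀ x ∈ B,
      infDist x ((A ⊓ B : Submodule ℂ X) : Set X) ≤ c * infDist x (A : Set X) := by
  by_contra h
  push_neg at h
  choose x hxB hxlt using fun n : ℕ => h ((n : ℝ) + 1) (by positivity)
  have hABne : ((A ⊓ B : Submodule ℂ X) : Set X).Nonempty := ⟨0, Submodule.zero_mem _⟩
  have hAne : ((A : Set X)).Nonempty := ⟨0, Submodule.zero_mem _⟩
  set d : ℕ → ℝ := fun n => infDist (x n) ((A ⊓ B : Submodule ℂ X) : Set X) with hd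
  have hdpos : ∀ n, 0 < d n := by
    intro n
    refine lt_of_le_of_lt ?_ (hxlt n)
    have hnn : (0:ℝ) ≤ (n:ℝ) + 1 := by positivity
    exact mul_nonneg hnn infDist_nonneg
  set y : ℕ → X := fun n => (((d n)⁻¹ : ℝ) : ℂ) • x n with hy
  have hcne : ∀ n, (((d n)⁻¹ : ℝ) : ℂ) ≠ 0 := fun n =>
    Complex.ofReal_ne_zero.2 (inv_ne_zero (ne_of_gt (hdpos n)))
  have hnorm : ∀ n, ‖(((d n)⁻¹ : ℝ) : ℂ)‖ = (d n)⁻¹ := fun n => by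
    rw [Complex.norm_real, Real.norm_eq_abs, abs_of_pos (inv_pos.2 (hdpos n))]
  have hy1 : ∀ n, infDist (y n) ((A ⊓ B : Submodule ℂ X) : Set X) = 1 := fun n => by
    rw [hy]
    simp only
    rw [aux_infDist_smul (hcne n), hnorm n]
    exact inv_mul_cancel₀ (ne_of_gt (hdpos n))
  have hyA : ∀ n, infDist (y n) (A : Set X) < 1 / ((n : ℝ) + 1) := fun n => by
    rw [hy]
    simp only
    rw [aux_infDist_smul (hcne n), hnorm n]
    rw [inv_mul_lt_iff₀ (hdpos n), mul_one_div,
      lt_div_iff₀ (by positivity : (0:ℝ) < (n:ℝ) + 1), mul_comm]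
    exact hxlt n
  have hyB : ∀ n, y n ∈ B := fun n => B.smul_mem _ (hxB n)
  -- pick nearby points of A ⊓ B
  have hp : ∀ n, ∃ p ∈ ((A ⊓ B : Submodule ℂ X) : Set X), dist (y n) p < 2 := fun n =>
    (infDist_lt_iff hABne).1 (by rw [hy1 n]; norm_num)
  choose p hpmem hpdist using hp
  set z : ℕ → X := fun n => y n - p n with hz
  have hpA : ∀ n, p n ∈ A := fun n => (Submodule.mem_inf.1 (hpmem n)).1
  have hpB : ∀ n, p n ∈ B := fun n => (Submodule.mem_inf.1 (hpmem n)).2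
  have hzB : ∀ n, z n ∈ B := fun n => B.sub_mem (hyB n) (hpB n)
  have hz1 : ∀ n, infDist (z n) ((A ⊓ B : Submodule ℂ X) : Set X) = 1 := fun n => by
    have := aux_infDist_sub_right (A ⊓ B : Submodule ℂ X).toAddSubgroup (hpmem n) (y n)
    rw [hz]; simpa using this.trans (hy1 n)
  have hzA : ∀ n, infDist (z n) (A : Set X) < 1 / ((n : ℝ) + 1) := fun n => by
    have := aux_infDist_sub_right A.toAddSubgroup (hpA n) (y n)
    rw [hz]
    simp only
    rw [show ((A.toAddSubgroup : Set X)) = (A : Set X) from rfl] at this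
    rw [this]
    exact hyA n
  have hznorm : ∀ n, ‖z n‖ < 2 := fun n => by
    rw [hz]; simpa [dist_eq_norm] using hpdist n
  -- the limit of dist-to-A bound
  have hbound : Tendsto (fun n : ℕ => 1 / ((n : ℝ) + 1)) atTop (nhds 0) :=
    tendsto_one_div_add_atTop_nhds_zero_nat
  rcases hfin with hfA | hfB
  · -- A finite dimensional: approximate z n by points of A
    have haex : ∀ n, ∃ a ∈ (A : Set X), dist (z n) a < 1 / ((n : ℝ) + 1) := fun n =>
      (infDist_lt_iff hAne).1 (hzA n)
    choose a hamem hadist using haex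
    have hanorm : ∀ n, ‖a n‖ ≤ 3 := fun n => by
      have h1 : ‖a n‖ ≤ ‖a n - z n‖ + ‖z n‖ := by
        calc ‖a n‖ = ‖a n - z n + z n‖ := by rw [sub_add_cancel]
          _ ≤ ‖a n - z n‖ + ‖z n‖ := norm_add_le _ _
      have h2 : ‖a n - z n‖ < 1 / ((n : ℝ) + 1) := by
        rw [← dist_eq_norm, dist_comm]; exact hadist n
      have h3 : 1 / ((n : ℝ) + 1) ≤ 1 := by
        rw [div_le_one (by positivity)]; linarith [Nat.cast_nonneg (α := ℝ) n]
      linarith [hznorm n]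
    set aA : ℕ → A := fun n => ⟨a n, hamem n⟩ with haA
    have hmem : ∀ n, aA n ∈ closedBall (0 : A) 3 := fun n => by
      rw [mem_closedBall, dist_zero_right]
      exact hanorm n
    obtain ⟨l, _, φ, hφ, hconv⟩ := (isCompact_closedBall (0 : A) 3).tendsto_subseq hmem
    have hconvX : Tendsto (fun n => a (φ n)) atTop (nhds (l : X)) :=
      ((continuous_subtype_val.tendsto l).comp hconv)
    have hdiff : Tendsto (fun n => z (φ n) - a (φ n)) atTop (nhds 0) := by
      refine squeeze_zero_norm (fun n => ?_) hbound
      have h1 : ‖z (φ n) - a (φ n)‖ < 1 / ((φ n : ℝ) + 1) := by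
        rw [← dist_eq_norm]; exact hadist (φ n)
      have h2 : 1 / ((φ n : ℝ) + 1) ≤ 1 / ((n : ℝ) + 1) := by
        apply one_div_le_one_div_of_le (by positivity)
        have hle : n ≤ φ n := hφ.le_apply
        have : ((n:ℝ)) ≤ (φ n : ℝ) := Nat.cast_le.2 hle
        linarith
      linarith
    have hzconv : Tendsto (fun n => z (φ n)) atTop (nhds (l : X)) := by
      have := hdiff.add hconvX
      simpa using this
    exact aux_final A B hB z hzB hz1 (l : X) l.2 φ hzconv
  · -- B finite dimensional
    set zB : ℕ → B := fun n => ⟨z n, hzB n⟩ with hzBdef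
    have hmem : ∀ n, zB n ∈ closedBall (0 : B) 2 := fun n => by
      rw [mem_closedBall, dist_zero_right]
      exact le_of_lt (hznorm n)
    obtain ⟨l, _, φ, hφ, hconv⟩ := (isCompact_closedBall (0 : B) 2).tendsto_subseq hmem
    have hzconv : Tendsto (fun n => z (φ n)) atTop (nhds (l : X)) :=
      ((continuous_subtype_val.tendsto l).comp hconv)
    -- the limit lies in A
    have hdistconv : Tendsto (fun n => infDist (z (φ n)) (A : Set X)) atTop
        (nhds (infDist (l : X) (A : Set X))) :=
      ((continuous_infDist_pt _).tendsto _).comp hzconv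
    have hdist0 : Tendsto (fun n => infDist (z (φ n)) (A : Set X)) atTop (nhds 0) := by
      apply squeeze_zero (fun n => infDist_nonneg) _ hbound
      intro n
      have h1 : infDist (z (φ n)) (A : Set X) < 1 / ((φ n : ℝ) + 1) := hzA (φ n)
      have h2 : 1 / ((φ n : ℝ) + 1) ≤ 1 / ((n : ℝ) + 1) := by
        apply one_div_le_one_div_of_le (by positivity)
        have hle : n ≤ φ n := hφ.le_apply
        have : ((n:ℝ)) ≤ (φ n : ℝ) := Nat.cast_le.2 hle
        linarith
      linarith
    have hlA : (l : X) ∈ A := by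
      rw [← SetLike.mem_coe]
      exact (hA.mem_iff_infDist_zero hAne).2 (tendsto_nhds_unique hdistconv hdist0)
    exact aux_final A B hB z hzB hz1 (l : X) hlA φ hzconv

/-- If `A`, `B` are closed subspaces of a Hilbert space, at least one of them
finite-dimensional, and `(b n)` is a sequence in `B` with `dist(b n, A) → 0`,
then `dist(b n, A ∩ B) → 0`. -/
theorem stmt_0 {X : Type*} [NormedAddCommGroup X] [InnerProductSpace ℂ X] [CompleteSpace X]
    (A B : Submodule ℂ X) (hA : IsClosed (A : Set X)) (hB : IsClosed (B : Set X))
    (hfin : FiniteDimensional ℂ A ∨ FiniteDimensional ℂ B)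
    (b : ℕ → X) (hb : ∀ n, b n ∈ B)
    (hdist : Tendsto (fun n => infDist (b n) (A : Set X)) atTop (nhds 0)) :
    Tendsto (fun n => infDist (b n) ((A ⊓ B : Submodule ℂ X) : Set X)) atTop (nhds 0) := by
  obtain ⟨c, hc, hkey⟩ := aux_key A B hA hB hfin
  have h1 : Tendsto (fun n => c * infDist (b n) (A : Set X)) atTop (nhds 0) := by
    simpa using hdist.const_mul c
  exact squeeze_zero (fun n => infDist_nonneg) (fun n => hkey _ (hb n)) h1
end

section
/- In the Hilbert space X = ℓ²(ℕ), let A = {(x₁, x₂, x₂, x₃, x₃, …) : x_k ∈ ℂ} and B = {(x₁, x₁, x₂, x₂, x₃, x₃, …) : x_k ∈ ℂ}. Then A ∩ B = {0}. -/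
/-- In `ℓ²(ℕ)` the subspaces
`A = {(x₁, x₂, x₂, x₃, x₃, …)}` (entries satisfy `f (2k+1) = f (2k+2)`) and
`B = {(x₁, x₁, x₂, x₂, …)}` (entries satisfy `f (2k) = f (2k+1)`)
intersect trivially: any `f ∈ A ∩ B` is zero. -/
theorem stmt_1 (f : lp (fun _ : ℕ => ℂ) 2)
    (hA : ∀ k : ℕ, f (2 * k + 1) = f (2 * k + 2))
    (hB : ∀ k : ℕ, f (2 * k) = f (2 * k + 1)) : f = 0 := by
  have hsucc : ∀ n : ℕ, f (n + 1) = f n := by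
    intro n
    rcases Nat.even_or_odd n with ⟨k, hk⟩ | ⟨k, hk⟩
    · subst hk; simpa [two_mul] using (hB k).symm
    · subst hk
      have := hA k
      simpa [two_mul, add_assoc] using this.symm
  have hconst : ∀ n : ℕ, f n = f 0 := by
    intro n; induction n with
    | zero => rfl
    | succ n ih => rw [hsucc n, ih]
  have hmem : Memℓp (fun n : ℕ => f n) 2 := lp.memℓp f
  have hsum : Summable fun n : ℕ => ‖f n‖ ^ (2 : ENNReal).toReal :=
    hmem.summable (by norm_num)
  have hsum0 : Summable fun _ : ℕ => ‖f 0‖ ^ (2 : ENNReal).toReal := by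
    simpa [hconst] using hsum
  have h0 : ‖f 0‖ ^ (2 : ENNReal).toReal = 0 := by
    exact (summable_const_iff _).mp hsum0
  have hf0 : f 0 = 0 := by
    have : ‖f 0‖ = 0 :=
      (Real.rpow_eq_zero (norm_nonneg _) (by norm_num)).mp h0
    simpa using this
  ext n
  simp [hconst n, hf0]
end

section
/- In ℓ²(ℕ) with the subspaces A = {(x₁, x₂, x₂, x₃, x₃, …)} and B = {(x₁, x₁, x₂, x₂, …)}, there exists a sequence (b_n) in B with dist(b_n, A) → 0 but dist(b_n, A ∩ B) → ∞; concretely, for b_n = (1, 1, 1 − 1/n, 1 − 1/n, 1 − 2/n, 1 − 2/n, …, 1/n, 1/n, 0, 0, …) and a_n = (1, 1 − 1/n, 1 − 1/n, 1 − 2/n, 1 − 2/n, …, 1/n, 0, 0, …) one has ‖b_n − a_n‖ = n^{−1/2} and ‖b_n‖ → ∞. -/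
/-!
Let `x = (1, 1 - 1/n, …, 1/n, 0, …)`. Then `b n = (x ⌊j/2⌋)_j ∈ B` and `a n = (x ⌈j/2⌉)_j ∈ A`
differ only at the odd indices `2k + 1 < 2n`, each time by `x k - x (k+1) = 1/n`, so
`‖b n - a n‖² = n · n⁻² = 1/n`. On the other hand a sequence in `A ∩ B` is constant, hence `0` in
`ℓ²`, so `dist(b n, A ∩ B) = ‖b n‖ ≥ √n / 2`, the first `n` entries of `b n` being at least `1/2`.
-/

open Filter Metric
open scoped ENNReal lp

namespace lp

variable {α : Type*} {E : α → Type*} [∀ i, NormedAddCommGroup (E i)]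

theorem hasSum_norm_sq (f : lp E 2) : HasSum (fun i => ‖f i‖ ^ 2) (‖f‖ ^ 2) := by
  simpa [Real.rpow_two] using hasSum_norm (p := 2) (by norm_num) f

theorem sum_norm_sq_le_norm_sq (f : lp E 2) (s : Finset α) :
    ∑ i ∈ s, ‖f i‖ ^ 2 ≤ ‖f‖ ^ 2 := by
  simpa [Real.rpow_two] using sum_rpow_le_norm_rpow (p := 2) (by norm_num) f s

theorem eq_zero_of_forall_apply_succ_eq {E : Type*} [NormedAddCommGroup E] {p : ℝ≥0∞}
    (hp : 0 < p.toReal) {f : lp (fun _ : ℕ => E) p} (hf : ∀ j, f (j + 1) = f j) : f = 0 := by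
  have hconst : ∀ j, f j = f 0 := fun j => by
    induction j with
    | zero => rfl
    | succ j ih => rw [hf, ih]
  have hsum := (lp.memℓp f).summable hp
  simp only [hconst, summable_const_iff, Real.rpow_eq_zero (norm_nonneg _) hp.ne',
    norm_eq_zero] at hsum
  ext j
  rw [hconst, hsum]
  rfl

theorem setOf_inter_setOf_pairs_eq_zero {E : Type*} [NormedAddCommGroup E] {p : ℝ≥0∞}
    (hp : 0 < p.toReal) :
    {f : lp (fun _ : ℕ => E) p | ∀ k, f (2 * k + 1) = f (2 * k + 2)} ∩
      {f | ∀ k, f (2 * k) = f (2 * k + 1)} = {0} := by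
  ext f
  simp only [Set.mem_inter_iff, Set.mem_ofPred_eq, Set.mem_singleton_iff]
  refine ⟨fun ⟨hA, hB⟩ => eq_zero_of_forall_apply_succ_eq hp fun j => ?_, ?_⟩
  · obtain ⟨k, rfl | rfl⟩ := Nat.even_or_odd' j
    · exact (hB k).symm
    · exact (hA k).symm
  · rintro rfl
    simp

end lp

noncomputable section

def ramp (n k : ℕ) : ℂ := if k < n then 1 - (k : ℂ) / n else 0

theorem ramp_sub_ramp_succ (n k : ℕ) :
    ramp n k - ramp n (k + 1) = if k < n then 1 / (n : ℂ) else 0 := by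
  unfold ramp
  split_ifs <;> try omega
  · push_cast; ring
  · have hn : (n : ℂ) = k + 1 := by exact_mod_cast (by omega : n = k + 1)
    rw [hn]
    field_simp
    ring
  · simp

theorem half_le_norm_ramp {n k : ℕ} (hk : 2 * k < n) : 1 / 2 ≤ ‖ramp n k‖ := by
  have hn : (0 : ℝ) < n := by exact_mod_cast (by omega : 0 < n)
  have hkn : (k : ℝ) / n ≤ 1 / 2 := by
    rw [div_le_iff₀ hn]
    have : (2 * k : ℝ) ≤ n := by exact_mod_cast hk.le
    linarith
  have : ramp n k = ((1 - k / n : ℝ) : ℂ) := by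
    simp [ramp, show k < n by omega]
  rw [this, Complex.norm_real, Real.norm_of_nonneg (by linarith)]
  linarith

theorem memℓp_ramp_comp {n N : ℕ} {g : ℕ → ℕ} (hg : ∀ j, N ≤ j → n ≤ g j) (p : ℝ≥0∞) :
    Memℓp (fun j => ramp n (g j)) p := by
  refine (memℓp_zero ((Set.finite_lt_nat N).subset fun j hj => ?_)).of_exponent_ge zero_le
  by_contra h
  exact hj (by simp [ramp, (hg j (not_lt.1 h)).not_gt])

def pairedRamp (n : ℕ) : ℓ²(ℕ, ℂ) :=
  ⟨fun j => ramp n (j / 2), memℓp_ramp_comp (N := 2 * n) (by omega) 2⟩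

def shiftedPairedRamp (n : ℕ) : ℓ²(ℕ, ℂ) :=
  ⟨fun j => ramp n ((j + 1) / 2), memℓp_ramp_comp (N := 2 * n) (by omega) 2⟩

theorem pairedRamp_apply (n j : ℕ) :
    pairedRamp n j = if j < 2 * n then 1 - ((j / 2 : ℕ) : ℂ) / n else 0 := by
  simp only [pairedRamp, ramp, show j / 2 < n ↔ j < 2 * n by omega]

theorem norm_pairedRamp_sub_shiftedPairedRamp_sq (n : ℕ) :
    ‖pairedRamp n - shiftedPairedRamp n‖ ^ 2 = (n : ℝ)⁻¹ := by
  set d := pairedRamp n - shiftedPairedRamp n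
  have hodd : ∀ k, ‖d (2 * k + 1)‖ ^ 2 = if k < n then ((n : ℝ) ^ 2)⁻¹ else 0 := fun k => by
    have hd : d (2 * k + 1) = ramp n k - ramp n (k + 1) := by
      change ramp n ((2 * k + 1) / 2) - ramp n ((2 * k + 1 + 1) / 2) = _
      congr 2 <;> omega
    rw [hd, ramp_sub_ramp_succ]
    split_ifs <;> simp
  have heven : ∀ j ∉ Set.range (fun k => 2 * k + 1), ‖d j‖ ^ 2 = 0 := fun j hj => by
    obtain ⟨k, rfl | rfl⟩ := Nat.even_or_odd' j
    swap
    · exact absurd ⟨k, rfl⟩ hj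
    change ‖ramp n (2 * k / 2) - ramp n ((2 * k + 1) / 2)‖ ^ 2 = 0
    rw [show (2 * k + 1) / 2 = 2 * k / 2 by omega, sub_self, norm_zero, zero_pow two_ne_zero]
  have hsum : HasSum (fun k => ‖d (2 * k + 1)‖ ^ 2) (n * ((n : ℝ) ^ 2)⁻¹) := by
    have : HasSum (fun k => ‖d (2 * k + 1)‖ ^ 2) (∑ k ∈ Finset.range n, ‖d (2 * k + 1)‖ ^ 2) :=
      hasSum_sum_of_ne_finset_zero fun k hk => by rw [hodd, if_neg (by simpa using hk)]
    rwa [Finset.sum_congr rfl fun k hk => by rw [hodd, if_pos (by simpa using hk)],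
      Finset.sum_const, Finset.card_range, nsmul_eq_mul] at this
  have := ((Function.Injective.hasSum_iff (fun a b h => by simp at h; omega) heven).1 hsum)
  rw [(lp.hasSum_norm_sq d).unique this]
  rcases eq_or_ne (n : ℝ) 0 with h | h
  · simp [h]
  · field_simp

theorem norm_pairedRamp_sub_shiftedPairedRamp (n : ℕ) :
    ‖pairedRamp n - shiftedPairedRamp n‖ = (n : ℝ) ^ (-(1 / 2 : ℝ)) := by
  rw [← Real.sqrt_sq (norm_nonneg _), norm_pairedRamp_sub_shiftedPairedRamp_sq, Real.sqrt_eq_rpow,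
    Real.inv_rpow n.cast_nonneg, Real.rpow_neg n.cast_nonneg]

theorem shiftedPairedRamp_apply_odd (n k : ℕ) :
    shiftedPairedRamp n (2 * k + 1) = shiftedPairedRamp n (2 * k + 2) :=
  congrArg (ramp n) (by omega)

theorem pairedRamp_apply_even (n k : ℕ) : pairedRamp n (2 * k) = pairedRamp n (2 * k + 1) :=
  congrArg (ramp n) (by omega)

theorem div_four_le_norm_pairedRamp_sq (n : ℕ) : (n : ℝ) / 4 ≤ ‖pairedRamp n‖ ^ 2 :=
  calc (n : ℝ) / 4 = ∑ _j ∈ Finset.range n, (1 / 2 : ℝ) ^ 2 := by simp; ring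
    _ ≤ ∑ j ∈ Finset.range n, ‖pairedRamp n j‖ ^ 2 := Finset.sum_le_sum fun j hj =>
      pow_le_pow_left₀ (by norm_num) (half_le_norm_ramp (by simp at hj; omega)) 2
    _ ≤ ‖pairedRamp n‖ ^ 2 := lp.sum_norm_sq_le_norm_sq _ _

theorem tendsto_norm_pairedRamp : Tendsto (fun n => ‖pairedRamp n‖) atTop atTop := by
  have hsq : Tendsto (fun n => ‖pairedRamp n‖ ^ 2) atTop atTop :=
    tendsto_atTop_mono div_four_le_norm_pairedRamp_sq
      (tendsto_natCast_atTop_atTop.atTop_div_const (by norm_num))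
  simpa only [Function.comp_def, Real.sqrt_sq (norm_nonneg _)] using
    Real.tendsto_sqrt_atTop.comp hsq

end

/-- In `ℓ²(ℕ)` with the pair-repeating subspaces
`A = {f | f (2k+1) = f (2k+2) for all k}` and `B = {f | f (2k) = f (2k+1) for all k}`,
there is a sequence `(b n)` in `B`, concretely
`b n = (1, 1, 1 − 1/n, 1 − 1/n, …, 1/n, 1/n, 0, 0, …)` (the `j`-th entry being
`1 − ⌊j/2⌋/n` for `j < 2n` and `0` otherwise), such that `dist(b n, A) → 0`
(witnessed by `a n ∈ A` with `‖b n − a n‖ = n^{-1/2}`), while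
`dist(b n, A ∩ B) → ∞` and `‖b n‖ → ∞`. -/
theorem stmt_2 :
    ∃ b : ℕ → lp (fun _ : ℕ => ℂ) 2,
      (∀ n k : ℕ, (b n) (2 * k) = (b n) (2 * k + 1)) ∧
      (∀ n : ℕ, 1 ≤ n → ∀ j : ℕ,
        (b n) j = if j < 2 * n then (1 : ℂ) - ((j / 2 : ℕ) : ℂ) / (n : ℂ) else 0) ∧
      (∀ n : ℕ, 1 ≤ n → ∃ a : lp (fun _ : ℕ => ℂ) 2,
        (∀ k : ℕ, a (2 * k + 1) = a (2 * k + 2)) ∧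
        ‖b n - a‖ = (n : ℝ) ^ (-(1/2 : ℝ))) ∧
      Tendsto (fun n => infDist (b n)
        {f : lp (fun _ : ℕ => ℂ) 2 | ∀ k : ℕ, f (2 * k + 1) = f (2 * k + 2)})
        atTop (nhds 0) ∧
      Tendsto (fun n => infDist (b n)
        ({f : lp (fun _ : ℕ => ℂ) 2 | ∀ k : ℕ, f (2 * k + 1) = f (2 * k + 2)} ∩
         {f : lp (fun _ : ℕ => ℂ) 2 | ∀ k : ℕ, f (2 * k) = f (2 * k + 1)}))
        atTop atTop ∧
      Tendsto (fun n => ‖b n‖) atTop atTop := by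
  refine ⟨pairedRamp, pairedRamp_apply_even, fun n _ => pairedRamp_apply n,
    fun n _ => ⟨shiftedPairedRamp n, shiftedPairedRamp_apply_odd n,
      norm_pairedRamp_sub_shiftedPairedRamp n⟩, ?_, ?_, tendsto_norm_pairedRamp⟩
  · have hle : ∀ n, infDist (pairedRamp n)
        {f : ℓ²(ℕ, ℂ) | ∀ k, f (2 * k + 1) = f (2 * k + 2)} ≤ (n : ℝ) ^ (-(1 / 2 : ℝ)) :=
      fun n => by
        rw [← norm_pairedRamp_sub_shiftedPairedRamp, ← dist_eq_norm]
        exact infDist_le_dist_of_mem (shiftedPairedRamp_apply_odd n)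
    exact squeeze_zero (fun n => infDist_nonneg) hle
      ((tendsto_rpow_neg_atTop (by norm_num)).comp tendsto_natCast_atTop_atTop)
  · simpa only [lp.setOf_inter_setOf_pairs_eq_zero (by norm_num : 0 < (2 : ℝ≥0∞).toReal),
      infDist_singleton, dist_zero_right] using tendsto_norm_pairedRamp
end

section
/- Let (S, ω) be a finite-dimensional complex symplectic space and W ⊆ S a co-isotropic subspace (W° ⊆ W). If L ⊆ S is a Lagrangian subspace (L° = L), then the image of L ∩ W under the quotient map W → W / W° is a Lagrangian subspace of the quotient W / W° equipped with the symplectic form induced by ω. -/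
/-- The annihilator `V° = {x | ω(x, y) = 0 for all y ∈ V}` of a subspace `V` with
respect to a sesquilinear form `ω` (conjugate-linear in the first argument). -/
def omegaAnnihilator {S : Type*} [AddCommGroup S] [Module ℂ S]
    (ω : S →ₗ⋆[ℂ] S →ₗ[ℂ] ℂ) (V : Submodule ℂ S) : Submodule ℂ S where
  carrier := {x | ∀ y ∈ V, ω x y = 0}
  zero_mem' := by intro y _; simp
  add_mem' := by
    intro a b ha hb y hy
    simp [map_add, LinearMap.add_apply, ha y hy, hb y hy]
  smul_mem' := by
    intro c a ha y hy
    simp [LinearMap.map_smulₛₗ, LinearMap.smul_apply, smul_eq_mul, ha y hy]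

/-!
The heart of the matter is the double annihilator identity `V°° = V`, inherited from the
real bilinear form `Re ω`: since `Re ω(x, i y) = -Im ω(x, y)`, the `ω`-annihilator of a
complex subspace is its `Re ω`-orthogonal, and `Re ω` is reflexive and nondegenerate on a
finite-dimensional real space. Hence `(L ∩ W)° = L° + W° = L + W°`, and as `W° ⊆ W` the
modular law gives `(L ∩ W)° ∩ W = (L + W°) ∩ W = (L ∩ W) + W°`.
-/

section Annihilator

variable {S : Type*} [AddCommGroup S] [Module ℂ S] (ω : S →ₗ⋆[ℂ] S →ₗ[ℂ] ℂ)

@[simp]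
lemma mem_omegaAnnihilator {V : Submodule ℂ S} {x : S} :
    x ∈ omegaAnnihilator ω V ↔ ∀ y ∈ V, ω x y = 0 := Iff.rfl

lemma omegaAnnihilator_sup (U V : Submodule ℂ S) :
    omegaAnnihilator ω (U ⊔ V) = omegaAnnihilator ω U ⊓ omegaAnnihilator ω V := by
  ext x
  simp only [mem_omegaAnnihilator, Submodule.mem_inf, Submodule.mem_sup]
  constructor
  · intro h
    exact ⟨fun u hu => by simpa using h u ⟨u, hu, 0, V.zero_mem, add_zero u⟩,
      fun v hv => by simpa using h v ⟨0, U.zero_mem, v, hv, zero_add v⟩⟩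
  · rintro ⟨hU, hV⟩ _ ⟨u, hu, v, hv, rfl⟩
    rw [map_add, hU u hu, hV v hv, add_zero]

end Annihilator

section RealPart

variable {S : Type*} [AddCommGroup S] [Module ℂ S] (ω : S →ₗ⋆[ℂ] S →ₗ[ℂ] ℂ)

noncomputable def reForm : LinearMap.BilinForm ℝ S :=
  LinearMap.mk₂ ℝ (fun x y => (ω x y).re)
    (fun x x' y => by simp)
    (fun r x y => by
      rw [← algebraMap_smul ℂ r x, LinearMap.map_smulₛₗ]
      simp [Complex.conj_ofReal, Complex.mul_re])
    (fun x y y' => by simp)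
    (fun r x y => by
      rw [← algebraMap_smul ℂ r y]
      simp)

@[simp]
lemma reForm_apply (x y : S) : reForm ω x y = (ω x y).re := rfl

lemma eq_zero_iff_re_eq_zero_and_re_I_smul_eq_zero (x y : S) :
    ω x y = 0 ↔ (ω x y).re = 0 ∧ (ω x (Complex.I • y)).re = 0 := by
  simp [Complex.ext_iff, Complex.mul_re]

variable {ω} (hskew : ∀ x y : S, ω x y = -(starRingEnd ℂ) (ω y x))
include hskew

lemma reForm_swap (x y : S) : reForm ω y x = -reForm ω x y := by
  simp [hskew y x]

lemma reForm_isRefl : (reForm ω).IsRefl := fun x y h => by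
  rw [reForm_swap hskew, h, neg_zero]

lemma reForm_nondegenerate (hnd : ∀ x : S, (∀ y : S, ω x y = 0) → x = 0) :
    (reForm ω).Nondegenerate :=
  (reForm_isRefl hskew).nondegenerate_iff_separatingLeft.2 fun x hx =>
    hnd x fun y => (eq_zero_iff_re_eq_zero_and_re_I_smul_eq_zero ω x y).2
      ⟨hx y, hx (Complex.I • y)⟩

lemma restrictScalars_omegaAnnihilator (V : Submodule ℂ S) :
    (omegaAnnihilator ω V).restrictScalars ℝ = (reForm ω).orthogonal (V.restrictScalars ℝ) := by
  ext x
  have hre (y : S) : reForm ω y x = 0 ↔ (ω x y).re = 0 := by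
    rw [reForm_swap hskew, neg_eq_zero, reForm_apply]
  simp only [Submodule.restrictScalars_mem, mem_omegaAnnihilator,
    LinearMap.BilinForm.mem_orthogonal_iff, hre]
  constructor
  · intro h y hy
    simp [h y hy]
  · intro h y hy
    exact (eq_zero_iff_re_eq_zero_and_re_I_smul_eq_zero ω x y).2
      ⟨h y hy, h _ (V.smul_mem Complex.I hy)⟩

lemma omegaAnnihilator_omegaAnnihilator [FiniteDimensional ℂ S]
    (hnd : ∀ x : S, (∀ y : S, ω x y = 0) → x = 0) (V : Submodule ℂ S) :
    omegaAnnihilator ω (omegaAnnihilator ω V) = V :=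
  Submodule.restrictScalars_injective ℝ ℂ S <| by
    rw [restrictScalars_omegaAnnihilator hskew, restrictScalars_omegaAnnihilator hskew,
      LinearMap.BilinForm.orthogonal_orthogonal (reForm_nondegenerate hskew hnd)
        (reForm_isRefl hskew)]

lemma omegaAnnihilator_inf [FiniteDimensional ℂ S]
    (hnd : ∀ x : S, (∀ y : S, ω x y = 0) → x = 0) (U V : Submodule ℂ S) :
    omegaAnnihilator ω (U ⊓ V) = omegaAnnihilator ω U ⊔ omegaAnnihilator ω V := by
  conv_lhs =>
    rw [← omegaAnnihilator_omegaAnnihilator hskew hnd U,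
      ← omegaAnnihilator_omegaAnnihilator hskew hnd V, ← omegaAnnihilator_sup]
  exact omegaAnnihilator_omegaAnnihilator hskew hnd _

end RealPart

/-- Linear symplectic reduction: let `(S, ω)` be a finite-dimensional complex
symplectic space, `W` a co-isotropic subspace (`W° ⊆ W`) and `L` a Lagrangian
subspace (`L° = L`).  Then the image of `L ∩ W` under the quotient map
`W → W / W°` is Lagrangian in the reduced space `W / W°` with the form induced
by `ω`.  Since the induced form is `ω̇([x],[y]) = ω(x,y)` and the annihilator of
the image of `L ∩ W` in `W/W°` consists of the classes `[x]`, `x ∈ W`, with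
`ω(x, y) = 0` for all `y ∈ L ∩ W`, while the image itself consists of the
classes of elements of `(L ∩ W) + W°`, this says precisely: for every `x ∈ W`,
`(∀ y ∈ L ⊓ W, ω x y = 0) ↔ x ∈ (L ⊓ W) ⊔ W°`. -/
theorem stmt_5 {S : Type*} [AddCommGroup S] [Module ℂ S] [FiniteDimensional ℂ S]
    (ω : S →ₗ⋆[ℂ] S →ₗ[ℂ] ℂ)
    (hskew : ∀ x y : S, ω x y = -(starRingEnd ℂ) (ω y x))
    (hnd : ∀ x : S, (∀ y : S, ω x y = 0) → x = 0)
    (W L : Submodule ℂ S)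
    (hW : omegaAnnihilator ω W ≤ W)
    (hL : omegaAnnihilator ω L = L) :
    ∀ x ∈ W, ((∀ y ∈ L ⊓ W, ω x y = 0) ↔ x ∈ (L ⊓ W) ⊔ omegaAnnihilator ω W) := by
  have hreduced : omegaAnnihilator ω (L ⊓ W) ⊓ W = L ⊓ W ⊔ omegaAnnihilator ω W := by
    rw [omegaAnnihilator_inf hskew hnd, hL, sup_comm, sup_inf_assoc_of_le L hW,
      sup_comm]
  intro x hx
  rw [← mem_omegaAnnihilator, ← hreduced, Submodule.mem_inf, and_iff_left hx]
end

section
/- Let H and 𝓗 be as follows: for each parameter t, H_t is self-adjoint on 𝓗_t, A_t ∈ 𝓑(𝓗_t) is self-adjoint with ‖A_t‖ uniformly bounded, and J_t ∈ 𝓑(𝓗_{t̃}, 𝓗_t) satisfies J_t* J_t = I, ‖(I − J_t J_t*)(H_t − z)^{-1}‖ → 0, ‖J_t (H_{t̃} − z)^{-1} − (H_t − z)^{-1} J_t‖ → 0, and ‖J_t A_{t̃} − A_t J_t‖ → 0 as t → t̃, for each non-real z. Then ‖(I − J_t J_t*)(H_t + A_t − z)^{-1}‖ → 0 and ‖J_t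 (H_{t̃} + A_{t̃} − z)^{-1} − (H_t + A_t − z)^{-1} J_t‖ → 0 as t → t̃, for each non-real z. -/
/-!
The second resolvent identity writes the perturbed resolvent `R' = (H + A - z)⁻¹` as
`R (1 - A R') = (1 - R' A) R` with `R = (H - z)⁻¹`, and both resolvents have norm at most
`1 / |Im z|` because `H` and `H + A` are symmetric. So `(1 - J J*) R'` is controlled by
`(1 - J J*) R`, and the algebraic identity
`J R̃' - R'_t J = (1 - R'_t A_t) (J R̃ - R_t J) (1 - Ã R̃') - R'_t (J Ã - A_t J) R̃'`
controls the perturbed intertwining defect by the unperturbed one and by that of `A`.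
-/

open Filter

/-- `R` is the resolvent `(T − z)⁻¹` of the (possibly unbounded) operator `T`. -/
def IsResolvent {E : Type*} [NormedAddCommGroup E] [InnerProductSpace ℂ E]
    (T : E →ₗ.[ℂ] E) (z : ℂ) (R : E →L[ℂ] E) : Prop :=
  (∀ x : E, ∃ hx : R x ∈ T.domain, T ⟨R x, hx⟩ - z • R x = x) ∧
  (∀ y : T.domain, R (T y - z • (y : E)) = (y : E))

/-- The sum `T + A` of an unbounded operator `T` and a bounded operator `A`,
defined on the domain of `T`. -/
def pAdd {E : Type*} [NormedAddCommGroup E] [InnerProductSpace ℂ E]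
    (T : E →ₗ.[ℂ] E) (A : E →L[ℂ] E) : E →ₗ.[ℂ] E :=
  ⟨T.domain, T.toFun + (A : E →ₗ[ℂ] E).comp T.domain.subtype⟩

open ContinuousLinearMap

theorem IsSelfAdjoint.isFormalAdjoint_self {E : Type*} [NormedAddCommGroup E]
    [InnerProductSpace ℂ E] [CompleteSpace E] {T : E →ₗ.[ℂ] E} (hT : IsSelfAdjoint T) :
    T.IsFormalAdjoint T := by
  have h := LinearPMap.adjoint_isFormalAdjoint hT.dense_domain
  rwa [LinearPMap.isSelfAdjoint_def.mp hT] at h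

section Resolvent

variable {E : Type*} [NormedAddCommGroup E] [InnerProductSpace ℂ E]
  {T : E →ₗ.[ℂ] E} {A : E →L[ℂ] E} {z : ℂ} {R R' : E →L[ℂ] E}

theorem LinearPMap.IsFormalAdjoint.pAdd_self (hT : T.IsFormalAdjoint T)
    (hA : (A : E →ₗ[ℂ] E).IsSymmetric) : (pAdd T A).IsFormalAdjoint (pAdd T A) := by
  intro x y
  change inner ℂ (T x + A x) (y : E) = inner ℂ (x : E) (T y + A y)
  rw [inner_add_left, inner_add_right, hT x y]
  exact congrArg _ (hA x y)

theorem IsResolvent.norm_le (hT : T.IsFormalAdjoint T) (hz : z.im ≠ 0)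
    (hR : IsResolvent T z R) : ‖R‖ ≤ |z.im|⁻¹ := by
  refine opNorm_le_bound _ (by positivity) fun x => ?_
  obtain ⟨hx, hTx⟩ := hR.1 x
  have hsymm : (inner ℂ (R x) (T ⟨R x, hx⟩)).im = 0 := by
    rw [← Complex.conj_eq_iff_im, inner_conj_symm]
    exact hT ⟨R x, hx⟩ ⟨R x, hx⟩
  have hre : (inner ℂ (R x) (R x)).re = ‖R x‖ ^ 2 := inner_self_eq_norm_sq (𝕜 := ℂ) _
  have him0 : (inner ℂ (R x) (R x)).im = 0 := inner_self_im (𝕜 := ℂ) _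
  have him : (inner ℂ (R x) x).im = -(z.im * ‖R x‖ ^ 2) := by
    calc (inner ℂ (R x) x).im = (inner ℂ (R x) (T ⟨R x, hx⟩ - z • R x)).im := by rw [hTx]
      _ = -(z.im * ‖R x‖ ^ 2) := by
        rw [inner_sub_right, inner_smul_right, Complex.sub_im, hsymm, Complex.mul_im, hre, him0]
        ring
  have hbound : |z.im| * ‖R x‖ ^ 2 ≤ ‖R x‖ * ‖x‖ := by
    calc |z.im| * ‖R x‖ ^ 2 = |(inner ℂ (R x) x).im| := by
          rw [him, abs_neg, abs_mul, abs_of_nonneg (sq_nonneg ‖R x‖)]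
      _ ≤ ‖R x‖ * ‖x‖ := (Complex.abs_im_le_norm _).trans (norm_inner_le_norm _ _)
  rw [le_inv_mul_iff₀ (abs_pos.mpr hz)]
  rcases (norm_nonneg (R x)).eq_or_lt with h0 | hpos
  · rw [← h0, mul_zero]
    exact norm_nonneg x
  · nlinarith

theorem IsResolvent.comp_one_sub_comp_eq_of_pAdd (hR : IsResolvent T z R)
    (hR' : IsResolvent (pAdd T A) z R') : R ∘L (1 - A ∘L R') = R' := by
  ext x
  obtain ⟨hx, hTx⟩ := hR'.1 x
  change T ⟨R' x, hx⟩ + A (R' x) - z • R' x = x at hTx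
  have hshift : T ⟨R' x, hx⟩ - z • R' x = x - A (R' x) := by
    calc T ⟨R' x, hx⟩ - z • R' x = (T ⟨R' x, hx⟩ + A (R' x) - z • R' x) - A (R' x) := by abel
      _ = x - A (R' x) := by rw [hTx]
  simpa [hshift] using hR.2 ⟨R' x, hx⟩

theorem IsResolvent.one_sub_comp_comp_eq_of_pAdd (hR : IsResolvent T z R)
    (hR' : IsResolvent (pAdd T A) z R') : (1 - R' ∘L A) ∘L R = R' := by
  ext x
  obtain ⟨hx, hTx⟩ := hR.1 x
  have hshift : pAdd T A ⟨R x, hx⟩ - z • R x = x + A (R x) := by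
    calc pAdd T A ⟨R x, hx⟩ - z • R x = (T ⟨R x, hx⟩ - z • R x) + A (R x) := by
          change T ⟨R x, hx⟩ + A (R x) - z • R x = _
          abel
      _ = x + A (R x) := by rw [hTx]
  have h : R' x + R' (A (R x)) = R x := by simpa [hshift] using hR'.2 ⟨R x, hx⟩
  simp only [one_def, sub_comp, id_comp, sub_apply, coe_comp, Function.comp_apply]
  exact sub_eq_of_eq_add h.symm

end Resolvent

section Perturbation

variable {𝕜 E F G : Type*} [NontriviallyNormedField 𝕜]
  [NormedAddCommGroup E] [NormedSpace 𝕜 E] [NormedAddCommGroup F] [NormedSpace 𝕜 F]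
  [NormedAddCommGroup G] [NormedSpace 𝕜 G]

theorem ContinuousLinearMap.norm_one_sub_comp_le (X Y : E →L[𝕜] E) :
    ‖1 - X ∘L Y‖ ≤ 1 + ‖X‖ * ‖Y‖ :=
  (norm_sub_le 1 _).trans (add_le_add (norm_id_le : ‖ContinuousLinearMap.id 𝕜 E‖ ≤ 1)
    (opNorm_comp_le X Y))

theorem ContinuousLinearMap.intertwining_eq_of_perturbation (J : E →L[𝕜] F)
    {R R' A : E →L[𝕜] E} {S S' B : F →L[𝕜] F}
    (hR : R ∘L (1 - A ∘L R') = R') (hS : (1 - S' ∘L B) ∘L S = S') :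
    J ∘L R' - S' ∘L J =
      (1 - S' ∘L B) ∘L (J ∘L R - S ∘L J) ∘L (1 - A ∘L R') - S' ∘L (J ∘L A - B ∘L J) ∘L R' := by
  have hexp : (1 - S' ∘L B) ∘L (J ∘L R - S ∘L J) ∘L (1 - A ∘L R') =
      (1 - S' ∘L B) ∘L J ∘L (R ∘L (1 - A ∘L R')) - ((1 - S' ∘L B) ∘L S) ∘L J ∘L (1 - A ∘L R') := by
    simp only [sub_comp, comp_sub, comp_assoc]
    abel
  rw [hexp, hR, hS]
  simp only [one_def, comp_sub, sub_comp, id_comp, comp_id, comp_assoc]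
  abel

theorem ContinuousLinearMap.norm_comp_le_of_perturbation (Q : E →L[𝕜] G) {R R' A : E →L[𝕜] E}
    (hR : R ∘L (1 - A ∘L R') = R') : ‖Q ∘L R'‖ ≤ ‖Q ∘L R‖ * (1 + ‖A‖ * ‖R'‖) :=
  calc ‖Q ∘L R'‖ = ‖(Q ∘L R) ∘L (1 - A ∘L R')‖ := by rw [comp_assoc, hR]
    _ ≤ ‖Q ∘L R‖ * ‖1 - A ∘L R'‖ := opNorm_comp_le _ _
    _ ≤ ‖Q ∘L R‖ * (1 + ‖A‖ * ‖R'‖) := by gcongr; exact norm_one_sub_comp_le A R'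

theorem ContinuousLinearMap.norm_intertwining_le_of_perturbation (J : E →L[𝕜] F)
    {R R' A : E →L[𝕜] E} {S S' B : F →L[𝕜] F}
    (hR : R ∘L (1 - A ∘L R') = R') (hS : (1 - S' ∘L B) ∘L S = S') :
    ‖J ∘L R' - S' ∘L J‖ ≤
      (1 + ‖S'‖ * ‖B‖) * ‖J ∘L R - S ∘L J‖ * (1 + ‖A‖ * ‖R'‖) +
        ‖S'‖ * ‖J ∘L A - B ∘L J‖ * ‖R'‖ := by
  rw [intertwining_eq_of_perturbation J hR hS]
  refine (norm_sub_le _ _).trans (add_le_add ?_ ?_)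
  · refine (opNorm_comp_le _ _).trans ?_
    rw [mul_assoc]
    gcongr
    · exact norm_one_sub_comp_le S' B
    · refine (opNorm_comp_le _ _).trans ?_
      gcongr
      exact norm_one_sub_comp_le A R'
  · refine (opNorm_comp_le _ _).trans ?_
    rw [mul_assoc]
    gcongr
    exact opNorm_comp_le _ _

end Perturbation

/-- `H t` acts on `𝓗_t = F t` and `Hlim` on `𝓗_{t̃} = E`; `R`, `Rlim`, `R'`, `R'lim` are the
resolvents of `H_t`, `Hlim`, `H_t + A_t`, `Hlim + Alim`, and `t → t̃` is an arbitrary filter `l`. -/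
theorem stmt_15_general {ι : Type*} (l : Filter ι)
    (F : ι → Type*) [∀ t, NormedAddCommGroup (F t)] [∀ t, InnerProductSpace ℂ (F t)]
    [∀ t, CompleteSpace (F t)]
    {E : Type*} [NormedAddCommGroup E] [InnerProductSpace ℂ E] [CompleteSpace E]
    (H : ∀ t, F t →ₗ.[ℂ] F t) (hH : ∀ t, IsSelfAdjoint (H t))
    (Hlim : E →ₗ.[ℂ] E) (hHlim : IsSelfAdjoint Hlim)
    (R : ∀ t, ℂ → (F t →L[ℂ] F t))
    (hR : ∀ t, ∀ z : ℂ, z.im ≠ 0 → IsResolvent (H t) z (R t z))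
    (Rlim : ℂ → (E →L[ℂ] E))
    (hRlim : ∀ z : ℂ, z.im ≠ 0 → IsResolvent Hlim z (Rlim z))
    (A : ∀ t, F t →L[ℂ] F t) (hA : ∀ t, IsSelfAdjoint (A t))
    (Alim : E →L[ℂ] E) (hAlim : IsSelfAdjoint Alim)
    (hAbd : ∃ C : ℝ, ∀ᶠ t in l, ‖A t‖ ≤ C)
    (J : ∀ t, E →L[ℂ] F t)
    (hres1 : ∀ z : ℂ, z.im ≠ 0 → Tendsto
      (fun t => ‖(1 - (J t).comp (ContinuousLinearMap.adjoint (J t))).comp (R t z)‖)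
      l (nhds 0))
    (hres2 : ∀ z : ℂ, z.im ≠ 0 → Tendsto
      (fun t => ‖(J t).comp (Rlim z) - (R t z).comp (J t)‖) l (nhds 0))
    (hAconv : Tendsto (fun t => ‖(J t).comp Alim - (A t).comp (J t)‖) l (nhds 0))
    (R' : ∀ t, ℂ → (F t →L[ℂ] F t))
    (hR' : ∀ t, ∀ z : ℂ, z.im ≠ 0 → IsResolvent (pAdd (H t) (A t)) z (R' t z))
    (R'lim : ℂ → (E →L[ℂ] E))
    (hR'lim : ∀ z : ℂ, z.im ≠ 0 → IsResolvent (pAdd Hlim Alim) z (R'lim z)) :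
    ∀ z : ℂ, z.im ≠ 0 →
      Tendsto
        (fun t => ‖(1 - (J t).comp (ContinuousLinearMap.adjoint (J t))).comp (R' t z)‖)
        l (nhds 0) ∧
      Tendsto (fun t => ‖(J t).comp (R'lim z) - (R' t z).comp (J t)‖) l (nhds 0) := by
  intro z hz
  obtain ⟨C, hC⟩ := hAbd
  set ε := |z.im|⁻¹
  have hR'_le (t) : ‖R' t z‖ ≤ ε :=
    (hR' t z hz).norm_le ((hH t).isFormalAdjoint_self.pAdd_self (hA t).isSymmetric) hz
  have hR'lim_le : ‖R'lim z‖ ≤ ε :=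
    (hR'lim z hz).norm_le (hHlim.isFormalAdjoint_self.pAdd_self hAlim.isSymmetric) hz
  have hperturb (t) : R t z ∘L (1 - A t ∘L R' t z) = R' t z :=
    (hR t z hz).comp_one_sub_comp_eq_of_pAdd (hR' t z hz)
  have hperturb' (t) : (1 - R' t z ∘L A t) ∘L R t z = R' t z :=
    (hR t z hz).one_sub_comp_comp_eq_of_pAdd (hR' t z hz)
  have hperturb_lim : Rlim z ∘L (1 - Alim ∘L R'lim z) = R'lim z :=
    (hRlim z hz).comp_one_sub_comp_eq_of_pAdd (hR'lim z hz)
  constructor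
  · refine squeeze_zero' (.of_forall fun t => norm_nonneg _) (hC.mono fun t hCt =>
      (norm_comp_le_of_perturbation _ (hperturb t)).trans ?_)
      (by simpa only [zero_mul] using (hres1 z hz).mul_const (1 + C * ε))
    have hC0 : 0 ≤ C := (norm_nonneg _).trans hCt
    gcongr
    exact hR'_le t
  · have hbound := (((hres2 z hz).const_mul (1 + ε * C)).mul_const (1 + ‖Alim‖ * ε)).add
      ((hAconv.const_mul ε).mul_const ε)
    refine squeeze_zero' (.of_forall fun t => norm_nonneg _) (hC.mono fun t hCt =>
      (norm_intertwining_le_of_perturbation (J t) hperturb_lim (hperturb' t)).trans ?_)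
      (by simpa only [mul_zero, zero_mul, add_zero] using hbound)
    have hC0 : 0 ≤ C := (norm_nonneg _).trans hCt
    have hR't_le := hR'_le t
    gcongr

/-- Generalized norm resolvent convergence is preserved under uniformly bounded
self-adjoint bounded perturbations `A_t` that are asymptotically intertwined by
the identification operators `J_t`.  Here `H_t` (on `𝓗_t = F t`) and `Hlim`
(on `𝓗_{t̃} = E`) are self-adjoint with resolvents `R t z`, `Rlim z`, the
perturbed operators `H_t + A_t`, `Hlim + Alim` have resolvents `R' t z`, `R'lim z`,
and `t → t̃` is modeled by an arbitrary filter `l`. -/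
theorem stmt_15 {ι : Type*} (l : Filter ι)
    (F : ι → Type*) [∀ t, NormedAddCommGroup (F t)] [∀ t, InnerProductSpace ℂ (F t)]
    [∀ t, CompleteSpace (F t)]
    {E : Type*} [NormedAddCommGroup E] [InnerProductSpace ℂ E] [CompleteSpace E]
    (H : ∀ t, F t →ₗ.[ℂ] F t) (hH : ∀ t, IsSelfAdjoint (H t))
    (Hlim : E →ₗ.[ℂ] E) (hHlim : IsSelfAdjoint Hlim)
    (R : ∀ t, ℂ → (F t →L[ℂ] F t))
    (hR : ∀ t, ∀ z : ℂ, z.im ≠ 0 → IsResolvent (H t) z (R t z))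
    (Rlim : ℂ → (E →L[ℂ] E))
    (hRlim : ∀ z : ℂ, z.im ≠ 0 → IsResolvent Hlim z (Rlim z))
    (A : ∀ t, F t →L[ℂ] F t) (hA : ∀ t, IsSelfAdjoint (A t))
    (Alim : E →L[ℂ] E) (hAlim : IsSelfAdjoint Alim)
    (hAbd : ∃ C : ℝ, ∀ᶠ t in l, ‖A t‖ ≤ C)
    (J : ∀ t, E →L[ℂ] F t)
    (hJ : ∀ t, (ContinuousLinearMap.adjoint (J t)).comp (J t) = 1)
    (hres1 : ∀ z : ℂ, z.im ≠ 0 → Tendsto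
      (fun t => ‖(1 - (J t).comp (ContinuousLinearMap.adjoint (J t))).comp (R t z)‖)
      l (nhds 0))
    (hres2 : ∀ z : ℂ, z.im ≠ 0 → Tendsto
      (fun t => ‖(J t).comp (Rlim z) - (R t z).comp (J t)‖) l (nhds 0))
    (hAconv : Tendsto (fun t => ‖(J t).comp Alim - (A t).comp (J t)‖) l (nhds 0))
    (R' : ∀ t, ℂ → (F t →L[ℂ] F t))
    (hR' : ∀ t, ∀ z : ℂ, z.im ≠ 0 → IsResolvent (pAdd (H t) (A t)) z (R' t z))
    (R'lim : ℂ → (E →L[ℂ] E))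
    (hR'lim : ∀ z : ℂ, z.im ≠ 0 → IsResolvent (pAdd Hlim Alim) z (R'lim z)) :
    ∀ z : ℂ, z.im ≠ 0 →
      Tendsto
        (fun t => ‖(1 - (J t).comp (ContinuousLinearMap.adjoint (J t))).comp (R' t z)‖)
        l (nhds 0) ∧
      Tendsto (fun t => ‖(J t).comp (R'lim z) - (R' t z).comp (J t)‖) l (nhds 0) :=
  stmt_15_general l F H hH Hlim hHlim R hR Rlim hRlim A hA Alim hAlim hAbd J hres1 hres2 hAconv R'
    hR' R'lim hR'lim
end
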